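/- For every continuous function f: [0,T] → R there exists a sequence of partitions (π_n) of [0,T] with mesh tending to zero such that Σ_{[s,t]∈π_n} |f(t∧u) − f(s∧u)|² → 0 for every u ∈ [0,T], i.e., f has zero quadratic variation along (π_n). -/

import Mathlib

open Finset Filter Topology

/-- A partition of `[a,b]` given by finitely many monotone grid points. -/
structure PartitionGrid (a b : ℝ) where
  n : ℕ
  t : Fin (n + 1) → ℝ
  mono : Monotone t
  first : t 0 = a
  last : t (Fin.last n) = b

namespace PartitionGrid

variable {a b : ℝ}

/-- The mesh of a partition: the largest interval length. -/
noncomputable def mesh (π : PartitionGrid a b) : ℝ :=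
  ⨆ i : Fin π.n, (π.t i.succ - π.t i.castSucc)

/-- The Riemann-type sum `∑_{[s,t] ∈ π} F s t` over the intervals of a partition. -/
def rsum {E : Type*} [AddCommMonoid E] (π : PartitionGrid a b) (F : ℝ → ℝ → E) : E :=
  ∑ i : Fin π.n, F (π.t i.castSucc) (π.t i.succ)

end PartitionGrid

/-- `RiemannLimit a b F L`: the Riemann-type sums of `F` over partitions of `[a,b]`
converge to `L` as the mesh tends to `0`. -/
def RiemannLimit {E : Type*} [SeminormedAddCommGroup E] (a b : ℝ) (F : ℝ → ℝ → E)
    (L : E) : Prop :=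
  ∀ ε > 0, ∃ δ > 0, ∀ π : PartitionGrid a b, π.mesh < δ → ‖π.rsum F - L‖ < ε

/-- `X` has finite `p`-variation on `[a,b]` (boundedness of the partition sums). -/
def FinitePVar {E : Type*} [SeminormedAddCommGroup E] (p a b : ℝ) (X : ℝ → E) : Prop :=
  ∃ M : ℝ, ∀ π : PartitionGrid a b,
    (∑ i : Fin π.n, ‖X (π.t i.succ) - X (π.t i.castSucc)‖ ^ p) ≤ M

/-- `X ∈ 𝒱^p([a,b])`: continuous and of finite `p`-variation. -/
def MemVp {E : Type*} [SeminormedAddCommGroup E] (p a b : ℝ) (X : ℝ → E) : Prop :=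
  ContinuousOn X (Set.Icc a b) ∧ FinitePVar p a b X

/-- Finite `r`-variation for a two-parameter (remainder) function. -/
def FiniteRVar2 {E : Type*} [SeminormedAddCommGroup E] (r a b : ℝ) (R : ℝ → ℝ → E) : Prop :=
  ∃ M : ℝ, ∀ π : PartitionGrid a b,
    (∑ i : Fin π.n, ‖R (π.t i.castSucc) (π.t i.succ)‖ ^ r) ≤ M

/-- Euclidean inner product on `Fin d → ℝ`. -/
def dot {d : ℕ} (x y : Fin d → ℝ) : ℝ := ∑ i, x i * y i

/-- Matrix-vector multiplication. -/
def mulVec' {d : ℕ} (M : Fin d → Fin d → ℝ) (v : Fin d → ℝ) : Fin d → ℝ :=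
  fun i => ∑ j, M i j * v j

/-- `Y` is controlled by `X` with Gubinelli derivative `Y'` (vector case). -/
def Controlled {d : ℕ} (q r a b : ℝ) (X Y : ℝ → Fin d → ℝ)
    (Y' : ℝ → Fin d → Fin d → ℝ) : Prop :=
  MemVp q a b Y' ∧
    FiniteRVar2 r a b (fun s t => Y t - Y s - mulVec' (Y' s) (X t - X s))

/-- `Y` is controlled by `X` with Gubinelli derivative `Y'` (scalar case). -/
def Controlled1 (q r a b : ℝ) (X Y Y' : ℝ → ℝ) : Prop :=
  MemVp q a b Y' ∧
    FiniteRVar2 r a b (fun s t => Y t - Y s - Y' s * (X t - X s))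

/-- A control function on the simplex `Δ_T`. -/
def IsControlFun (T : ℝ) (ω : ℝ → ℝ → ℝ) : Prop :=
  ContinuousOn (fun z : ℝ × ℝ => ω z.1 z.2)
      {z : ℝ × ℝ | 0 ≤ z.1 ∧ z.1 ≤ z.2 ∧ z.2 ≤ T} ∧
    (∀ s ∈ Set.Icc (0 : ℝ) T, ω s s = 0) ∧
    (∀ s t : ℝ, 0 ≤ s → s ≤ t → t ≤ T → 0 ≤ ω s t) ∧
    (∀ s u t : ℝ, 0 ≤ s → s ≤ u → u ≤ t → t ≤ T → ω s u + ω u t ≤ ω s t)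

/-- An increasing (refining) sequence of partitions with mesh tending to zero. -/
def IncreasingSeq {T : ℝ} (π : ℕ → PartitionGrid 0 T) : Prop :=
  (∀ n, Set.range (π n).t ⊆ Set.range (π (n + 1)).t) ∧
    Tendsto (fun n => (π n).mesh) atTop (𝓝 0)

/-- `f` has quadratic variation `Q` along the partition sequence `π` in the sense
of Föllmer. -/
def HasQV {T : ℝ} (π : ℕ → PartitionGrid 0 T) (f : ℝ → ℝ) (Q : ℝ → ℝ) : Prop :=
  ContinuousOn Q (Set.Icc 0 T) ∧
    ∀ u ∈ Set.Icc (0 : ℝ) T,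
      Tendsto (fun n => ∑ i : Fin (π n).n,
          (f (min ((π n).t i.succ) u) - f (min ((π n).t i.castSucc) u)) ^ 2)
        atTop (𝓝 (Q u))

/-! If `f` moves by `D` across an interval, the intermediate value theorem cuts the interval into
`m` pieces across each of which `f` moves by exactly `D / m`; their quadratic variation sum is
`D² / m`, as small as we like. Doing this on every block of a fine grid gives partitions with
small mesh and small quadratic variation sum. Stopping `f` at `u` only alters the one interval
straddling `u`, whose term is at most the squared oscillation of `f` over an interval no longer
than the mesh, and this tends to `0` by uniform continuity. -/

theorem add_mul_sub_mem_uIcc {x y θ : ℝ} (h₀ : 0 ≤ θ) (h₁ : θ ≤ 1) :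
    x + θ * (y - x) ∈ Set.uIcc x y := by
  rcases le_total x y with h | h
  · exact Set.mem_uIcc_of_le (by nlinarith) (by nlinarith)
  · exact Set.mem_uIcc_of_ge (by nlinarith) (by nlinarith)

namespace PartitionGrid

variable {a b c : ℝ}

theorem t_mem_Icc (π : PartitionGrid a b) (k : Fin (π.n + 1)) : π.t k ∈ Set.Icc a b := by
  constructor
  · simpa only [π.first] using π.mono (Fin.zero_le k)
  · simpa only [π.last] using π.mono (Fin.le_last k)

theorem t_eq_right (π : PartitionGrid a b) {k : Fin (π.n + 1)} (hk : (k : ℕ) = π.n) :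
    π.t k = b := by
  obtain rfl : k = Fin.last π.n := Fin.ext hk
  exact π.last

theorem t_eq_left (π : PartitionGrid a b) {k : Fin (π.n + 1)} (hk : (k : ℕ) = 0) :
    π.t k = a := by
  obtain rfl : k = 0 := Fin.ext hk
  exact π.first

def single (h : a ≤ b) : PartitionGrid a b where
  n := 1
  t := ![a, b]
  mono := Fin.monotone_iff_le_succ.mpr fun i => by fin_cases i; simpa using h
  first := rfl
  last := rfl

theorem t_succ_sub_le (π : PartitionGrid a b) (i : Fin π.n) :
    π.t i.succ - π.t i.castSucc ≤ b - a :=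
  sub_le_sub (π.t_mem_Icc _).2 (π.t_mem_Icc _).1

theorem mesh_nonneg (π : PartitionGrid a b) : 0 ≤ π.mesh :=
  Real.iSup_nonneg fun i => sub_nonneg.2 (π.mono i.castSucc_le_succ)

theorem t_succ_sub_le_mesh (π : PartitionGrid a b) (i : Fin π.n) :
    π.t i.succ - π.t i.castSucc ≤ π.mesh :=
  le_ciSup (f := fun i : Fin π.n => π.t i.succ - π.t i.castSucc) (Set.finite_range _).bddAbove i

theorem mesh_le (π : PartitionGrid a b) {δ : ℝ} (hδ : 0 ≤ δ)
    (h : ∀ i : Fin π.n, π.t i.succ - π.t i.castSucc ≤ δ) : π.mesh ≤ δ :=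
  Real.iSup_le h hδ

section append

variable (π : PartitionGrid a b) (σ : PartitionGrid b c)

def appendPts (k : Fin (π.n + σ.n + 1)) : ℝ :=
  if h : (k : ℕ) ≤ π.n then π.t ⟨k, by omega⟩ else σ.t ⟨k - π.n, by omega⟩

theorem appendPts_of_le (k : Fin (π.n + σ.n + 1)) (hk : (k : ℕ) ≤ π.n) :
    appendPts π σ k = π.t ⟨k, by omega⟩ :=
  dif_pos hk

theorem appendPts_of_ge (k : Fin (π.n + σ.n + 1)) (hk : π.n ≤ k) :
    appendPts π σ k = σ.t ⟨k - π.n, by omega⟩ := by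
  rcases hk.eq_or_lt with h | h
  · rw [appendPts_of_le π σ k h.ge, π.t_eq_right h.symm, σ.t_eq_left (by simp [h])]
  · exact dif_neg (by omega)

theorem appendPts_castAdd_castSucc (i : Fin π.n) :
    appendPts π σ (Fin.castAdd σ.n i).castSucc = π.t i.castSucc := by
  rw [appendPts_of_le _ _ _ (by simp)]; rfl

theorem appendPts_castAdd_succ (i : Fin π.n) :
    appendPts π σ (Fin.castAdd σ.n i).succ = π.t i.succ := by
  rw [appendPts_of_le _ _ _ (by simp)]; rfl

theorem appendPts_natAdd_castSucc (j : Fin σ.n) :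
    appendPts π σ (Fin.natAdd π.n j).castSucc = σ.t j.castSucc := by
  rw [appendPts_of_ge _ _ _ (by simp)]; congr 1; ext; simp

theorem appendPts_natAdd_succ (j : Fin σ.n) :
    appendPts π σ (Fin.natAdd π.n j).succ = σ.t j.succ := by
  rw [appendPts_of_ge _ _ _ (by simp; omega)]; congr 1; ext; simp; omega

def append : PartitionGrid a c where
  n := π.n + σ.n
  t := appendPts π σ
  mono := Fin.monotone_iff_le_succ.mpr <| Fin.addCases
    (fun i => by
      rw [appendPts_castAdd_castSucc, appendPts_castAdd_succ]
      exact π.mono i.castSucc_le_succ)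
    (fun j => by
      rw [appendPts_natAdd_castSucc, appendPts_natAdd_succ]
      exact σ.mono j.castSucc_le_succ)
  first := by rw [appendPts_of_le _ _ _ (by simp)]; exact π.t_eq_left rfl
  last := by rw [appendPts_of_ge _ _ _ (by simp)]; exact σ.t_eq_right (by simp)

theorem rsum_append {E : Type*} [AddCommMonoid E] (F : ℝ → ℝ → E) :
    (π.append σ).rsum F = π.rsum F + σ.rsum F := by
  change ∑ k : Fin (π.n + σ.n), F (appendPts π σ k.castSucc) (appendPts π σ k.succ) = _
  simp only [Fin.sum_univ_add, appendPts_castAdd_castSucc, appendPts_castAdd_succ,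
    appendPts_natAdd_castSucc, appendPts_natAdd_succ, rsum]

theorem forall_append {P : ℝ → ℝ → Prop}
    (hπ : ∀ i : Fin π.n, P (π.t i.castSucc) (π.t i.succ))
    (hσ : ∀ j : Fin σ.n, P (σ.t j.castSucc) (σ.t j.succ)) (k : Fin (π.append σ).n) :
    P ((π.append σ).t k.castSucc) ((π.append σ).t k.succ) := by
  refine Fin.addCases (motive := fun k : Fin (π.n + σ.n) =>
    P (appendPts π σ k.castSucc) (appendPts π σ k.succ)) (fun i => ?_) (fun j => ?_) k
  · rw [appendPts_castAdd_castSucc, appendPts_castAdd_succ]; exact hπ i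
  · rw [appendPts_natAdd_castSucc, appendPts_natAdd_succ]; exact hσ j

end append

def qvSum (π : PartitionGrid a b) (f : ℝ → ℝ) : ℝ :=
  π.rsum fun s t => (f t - f s) ^ 2

theorem qvSum_nonneg (π : PartitionGrid a b) (f : ℝ → ℝ) : 0 ≤ π.qvSum f := by
  unfold qvSum rsum; positivity

theorem qvSum_single (h : a ≤ b) (f : ℝ → ℝ) : (single h).qvSum f = (f b - f a) ^ 2 := by
  change ∑ i : Fin 1, (f (![a, b] i.succ) - f (![a, b] i.castSucc)) ^ 2 = _
  simp

theorem qvSum_append (π : PartitionGrid a b) (σ : PartitionGrid b c) (f : ℝ → ℝ) :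
    (π.append σ).qvSum f = π.qvSum f + σ.qvSum f :=
  rsum_append π σ _

/-- Stopping `f` at `u` changes only the one interval straddling `u`, whose term is then at most
the squared oscillation of `f` on it. -/
theorem qvSum_stopped_le (π : PartitionGrid a b) (f : ℝ → ℝ) (u : ℝ) {ε : ℝ}
    (hosc : ∀ i : Fin π.n, ∀ x ∈ Set.Icc (π.t i.castSucc) (π.t i.succ),
      |f x - f (π.t i.castSucc)| ≤ ε) :
    π.qvSum (fun x => f (min x u)) ≤ π.qvSum f + ε ^ 2 := by
  classical
  set S := Finset.univ.filter fun i : Fin π.n => π.t i.castSucc < u ∧ u < π.t i.succ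
  have hS : S.card ≤ 1 := by
    refine Finset.card_le_one.2 fun i hi j hj => ?_
    simp only [S, Finset.mem_filter, Finset.mem_univ, true_and] at hi hj
    by_contra hij
    rcases lt_or_gt_of_ne hij with h | h
    · linarith [π.mono (Fin.succ_le_castSucc_iff.2 h)]
    · linarith [π.mono (Fin.succ_le_castSucc_iff.2 h)]
  have hterm : ∀ i : Fin π.n,
      (f (min (π.t i.succ) u) - f (min (π.t i.castSucc) u)) ^ 2 ≤
        (f (π.t i.succ) - f (π.t i.castSucc)) ^ 2 + if i ∈ S then ε ^ 2 else 0 := by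
    intro i
    have hite : (0 : ℝ) ≤ if i ∈ S then ε ^ 2 else 0 := by positivity
    rcases le_or_gt u (π.t i.castSucc) with hu | hu
    · rw [min_eq_right hu, min_eq_right (hu.trans (π.mono i.castSucc_le_succ)), sub_self]
      nlinarith [sq_nonneg (f (π.t i.succ) - f (π.t i.castSucc))]
    rcases le_or_gt (π.t i.succ) u with hu' | hu'
    · rw [min_eq_left hu', min_eq_left hu.le]
      linarith [sq_nonneg (f (π.t i.succ) - f (π.t i.castSucc))]
    · have hiS : i ∈ S := by simp [S, hu, hu']
      rw [min_eq_right hu'.le, min_eq_left hu.le, if_pos hiS, ← sq_abs]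
      have := hosc i u ⟨hu.le, hu'.le⟩
      nlinarith [abs_nonneg (f u - f (π.t i.castSucc)),
        sq_nonneg (f (π.t i.succ) - f (π.t i.castSucc))]
  calc π.qvSum (fun x => f (min x u))
      ≤ ∑ i : Fin π.n, ((f (π.t i.succ) - f (π.t i.castSucc)) ^ 2 +
          if i ∈ S then ε ^ 2 else 0) :=
        Finset.sum_le_sum (s := Finset.univ) fun i _ => hterm i
    _ = π.qvSum f + S.card * ε ^ 2 := by
      rw [Finset.sum_add_distrib, Finset.sum_ite_mem, Finset.univ_inter, Finset.sum_const,
        nsmul_eq_mul]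
      rfl
    _ ≤ π.qvSum f + ε ^ 2 := by
      gcongr
      exact mul_le_of_le_one_left (by positivity) (by exact_mod_cast hS)

/-- The pieces are chosen by the intermediate value theorem so that `f` has the same increment
`(f b - f a) / (m + 1)` across each of them. -/
theorem exists_qvSum_eq_div {f : ℝ → ℝ} (hab : a ≤ b) (hf : ContinuousOn f (Set.Icc a b))
    (m : ℕ) : ∃ π : PartitionGrid a b, π.qvSum f = (f b - f a) ^ 2 / (m + 1) := by
  induction m generalizing a with
  | zero => exact ⟨single hab, by simp [qvSum_single]⟩
  | succ m ih =>
    have hθ : (0 : ℝ) ≤ 1 / (m + 2) := by positivity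
    have hθ' : 1 / ((m : ℝ) + 2) ≤ 1 := by rw [div_le_one (by positivity)]; linarith
    obtain ⟨x, hx, hfx⟩ := intermediate_value_uIcc (by rwa [Set.uIcc_of_le hab])
      (add_mul_sub_mem_uIcc (x := f a) (y := f b) hθ hθ')
    rw [Set.uIcc_of_le hab] at hx
    obtain ⟨σ, hσ⟩ := ih hx.2 (hf.mono (Set.Icc_subset_Icc_left hx.1))
    refine ⟨(single hx.1).append σ, ?_⟩
    rw [qvSum_append, qvSum_single, hσ, hfx]
    push_cast
    field_simp
    ring

theorem exists_qvSum_le {f : ℝ → ℝ} (hab : a ≤ b) (hf : ContinuousOn f (Set.Icc a b))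
    {ε : ℝ} (hε : 0 < ε) : ∃ π : PartitionGrid a b, π.qvSum f ≤ ε := by
  obtain ⟨m, hm⟩ := exists_nat_ge ((f b - f a) ^ 2 / ε)
  obtain ⟨π, hπ⟩ := exists_qvSum_eq_div hab hf m
  refine ⟨π, hπ ▸ div_le_of_le_mul₀ (by positivity) hε.le ?_⟩
  rw [div_le_iff₀ hε] at hm
  nlinarith

theorem exists_forall_sub_le_qvSum_le_mul {f : ℝ → ℝ} {δ η : ℝ} (hδ : 0 ≤ δ)
    (hη : 0 < η) (j : ℕ) (hab : a ≤ b) (hba : b - a ≤ (j + 1) * δ)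
    (hf : ContinuousOn f (Set.Icc a b)) :
    ∃ π : PartitionGrid a b, (∀ i : Fin π.n, π.t i.succ - π.t i.castSucc ≤ δ) ∧
      π.qvSum f ≤ (j + 1) * η := by
  induction j generalizing b with
  | zero =>
    simp only [Nat.cast_zero, zero_add, one_mul] at hba ⊢
    obtain ⟨π, hπ⟩ := exists_qvSum_le hab hf hη
    exact ⟨π, fun i => (π.t_succ_sub_le i).trans hba, hπ⟩
  | succ j ih =>
    push_cast at hba ⊢
    set c := max a (b - δ)
    have hac : a ≤ c := le_max_left _ _
    have hcb : c ≤ b := max_le hab (by linarith)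
    have hca : c - a ≤ (j + 1) * δ :=
      sub_le_iff_le_add.mpr (max_le (le_add_of_nonneg_left (by positivity)) (by linarith))
    obtain ⟨π, hπδ, hπ⟩ := ih hac hca (hf.mono (Set.Icc_subset_Icc_right hcb))
    obtain ⟨σ, hσ⟩ := exists_qvSum_le hcb (hf.mono (Set.Icc_subset_Icc_left hac)) hη
    have hσδ (i : Fin σ.n) : σ.t i.succ - σ.t i.castSucc ≤ δ :=
      (σ.t_succ_sub_le i).trans (by linarith [le_max_right a (b - δ)])
    refine ⟨π.append σ, π.forall_append σ (P := fun s t => t - s ≤ δ) hπδ hσδ, ?_⟩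
    rw [qvSum_append]
    linarith

theorem exists_mesh_le_qvSum_le {f : ℝ → ℝ} (hab : a ≤ b)
    (hf : ContinuousOn f (Set.Icc a b)) {δ ε : ℝ} (hδ : 0 < δ) (hε : 0 < ε) :
    ∃ π : PartitionGrid a b, π.mesh ≤ δ ∧ π.qvSum f ≤ ε := by
  obtain ⟨k, hk⟩ := exists_nat_ge ((b - a) / δ)
  rw [div_le_iff₀ hδ] at hk
  obtain ⟨π, hπδ, hπ⟩ :=
    exists_forall_sub_le_qvSum_le_mul hδ.le (div_pos hε k.cast_add_one_pos) k hab (by linarith) hf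
  rw [mul_div_cancel₀ ε (Nat.cast_add_one_ne_zero k)] at hπ
  exact ⟨π, π.mesh_le hδ.le hπδ, hπ⟩

theorem tendsto_qvSum_stopped {f : ℝ → ℝ} (hf : ContinuousOn f (Set.Icc a b))
    {π : ℕ → PartitionGrid a b} (hmesh : Tendsto (fun n => (π n).mesh) atTop (𝓝 0))
    (hqv : Tendsto (fun n => (π n).qvSum f) atTop (𝓝 0)) (u : ℝ) :
    Tendsto (fun n => (π n).qvSum fun x => f (min x u)) atTop (𝓝 0) := by
  refine tendsto_order.2 ⟨fun c hc => Eventually.of_forall fun n =>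
    hc.trans_le (qvSum_nonneg _ _), fun c hc => ?_⟩
  obtain ⟨δ, hδ, hfδ⟩ := Metric.uniformContinuousOn_iff_le.1
    (isCompact_Icc.uniformContinuousOn_of_continuous hf) (√(c / 2)) (by positivity)
  filter_upwards [hmesh.eventually (eventually_le_nhds hδ),
    hqv.eventually (eventually_lt_nhds (half_pos hc))] with n hn hqn
  have hosc : ∀ i : Fin (π n).n, ∀ x ∈ Set.Icc ((π n).t i.castSucc) ((π n).t i.succ),
      |f x - f ((π n).t i.castSucc)| ≤ √(c / 2) := by
    intro i x hx
    have hi := (π n).t_mem_Icc i.castSucc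
    have hx' : x ∈ Set.Icc a b := ⟨hi.1.trans hx.1, hx.2.trans ((π n).t_mem_Icc i.succ).2⟩
    refine hfδ x hx' _ hi ?_
    rw [Real.dist_eq, abs_of_nonneg (by linarith [hx.1])]
    linarith [hx.2, (π n).t_succ_sub_le_mesh i]
  calc (π n).qvSum (fun x => f (min x u)) ≤ (π n).qvSum f + √(c / 2) ^ 2 :=
        (π n).qvSum_stopped_le f u hosc
    _ < c := by rw [Real.sq_sqrt (by positivity)]; linarith

end PartitionGrid

open PartitionGrid

/-- every continuous function has a sequence of partitions, with
mesh tending to zero, along which its quadratic variation vanishes. -/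
theorem exists_partitionSeq_zero_qv (T : ℝ) (hT : 0 < T)
    (f : ℝ → ℝ) (hf : ContinuousOn f (Set.Icc 0 T)) :
    ∃ π : ℕ → PartitionGrid 0 T,
      Tendsto (fun n => (π n).mesh) atTop (𝓝 0) ∧
      ∀ u ∈ Set.Icc (0 : ℝ) T,
        Tendsto (fun n => ∑ i : Fin (π n).n,
            (f (min ((π n).t i.succ) u) - f (min ((π n).t i.castSucc) u)) ^ 2)
          atTop (𝓝 0) := by
  have hpos (n : ℕ) : (0 : ℝ) < 1 / (n + 1) := Nat.one_div_pos_of_nat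
  choose π hπδ hπqv using fun n =>
    exists_mesh_le_qvSum_le hT.le hf (hpos n) (hpos n)
  have hmesh : Tendsto (fun n => (π n).mesh) atTop (𝓝 0) :=
    squeeze_zero (fun n => (π n).mesh_nonneg) hπδ
      tendsto_one_div_add_atTop_nhds_zero_nat
  have hqv : Tendsto (fun n => (π n).qvSum f) atTop (𝓝 0) :=
    squeeze_zero (fun n => (π n).qvSum_nonneg f) hπqv tendsto_one_div_add_atTop_nhds_zero_nat
  exact ⟨π, hmesh, fun u _ => tendsto_qvSum_stopped hf hmesh hqv u⟩
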